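/- arXiv:2510.02400 — 2 statements merged into one kernel-verified Lean document; each statement's English description precedes it below -/
import Mathlib

section
/- Let k ≥ 3 and let G be a connected k-regular graph of diameter 2 that is triangle-free and irreducible. Then in the bipartite double cover B(G), for any two vertices x = (v,i) and y = (w,j): the distance d(x,y) equals 1 if and only if i ≠ j and v is adjacent to w; d(x,y) = 2 if and only if i = j, v ≠ w, and v is not adjacent to w; d(x,y) = 3 if and only if i ≠ j, v ≠ w, and v is not adjacent to w; d(x,y) = 4 if and only if i = j and v is adjacent to w; and d(x,y) = 5 if and only if i ≠ j and v = w. -/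
open SimpleGraph

/-- The bipartite double cover of a graph `G`, on vertex set `V ⊕ V`. -/
def bipDoubleCover {V : Type*} (G : SimpleGraph V) : SimpleGraph (V ⊕ V) where
  Adj x y :=
    match x, y with
    | Sum.inl u, Sum.inr v => G.Adj u v
    | Sum.inr u, Sum.inl v => G.Adj u v
    | _, _ => False
  symm := by
    constructor
    rintro (u | u) (v | v) h
    · exact h.elim
    · exact h.symm
    · exact h.symm
    · exact h.elim
  loopless := by
    constructor
    rintro (u | u) h
    · exact h
    · exact h

/-- Identify `V × {0,1}` with `V ⊕ V`: `inc false v` is `(v,0)`, `inc true v` is `(v,1)`. -/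
def inc {V : Type*} (i : Bool) (v : V) : V ⊕ V := if i then Sum.inr v else Sum.inl v

section Aux

variable {V : Type*}

/-- Projection homomorphism from the bipartite double cover to `G`. -/
def bdcProj (G : SimpleGraph V) : bipDoubleCover G →g G where
  toFun := Sum.elim id id
  map_rel' := by
    rintro (u | u) (v | v) h
    · exact h.elim
    · exact h
    · exact h
    · exact h.elim

lemma bdc_adj_side {G : SimpleGraph V} {x y : V ⊕ V}
    (h : (bipDoubleCover G).Adj x y) : x.isLeft = !y.isLeft := by
  rcases x with u | u <;> rcases y with z | z
  · exact h.elim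
  · rfl
  · rfl
  · exact h.elim

lemma bdc_parity {G : SimpleGraph V} {x y : V ⊕ V}
    (q : (bipDoubleCover G).Walk x y) :
    Even q.length ↔ (x.isLeft = y.isLeft) := by
  induction q with
  | nil => simp
  | cons h p ih =>
    rw [SimpleGraph.Walk.length_cons, Nat.even_add_one, ih, bdc_adj_side h]
    exact (by decide : ∀ b c : Bool, (¬(b = c)) ↔ ((!b) = c)) _ _

@[simp] lemma isLeft_inc (i : Bool) (v : V) : (inc i v).isLeft = !i := by
  cases i <;> rfl

@[simp] lemma elim_inc (i : Bool) (v : V) : Sum.elim (id : V → V) id (inc i v) = v := by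
  cases i <;> rfl

lemma bdc_adj_of (G : SimpleGraph V) {i j : Bool} {v w : V} (hij : i ≠ j)
    (h : G.Adj v w) : (bipDoubleCover G).Adj (inc i v) (inc j w) := by
  cases i <;> cases j
  · exact absurd rfl hij
  · exact h
  · exact h
  · exact absurd rfl hij

lemma bdc_lift (G : SimpleGraph V) {v w : V} (p : G.Walk v w) :
    ∀ i j : Bool, (i = j ↔ Even p.length) →
      ∃ q : (bipDoubleCover G).Walk (inc i v) (inc j w), q.length = p.length := by
  induction p with
  | nil =>
    intro i j hij
    have : i = j := hij.mpr (by simp)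
    subst this
    exact ⟨SimpleGraph.Walk.nil, rfl⟩
  | cons h p ih =>
    intro i j hij
    rename_i a b c
    have hb : (bipDoubleCover G).Adj (inc i a) (inc (!i) b) :=
      bdc_adj_of G (by cases i <;> simp) h
    have hpar : (!i) = j ↔ Even p.length := by
      rw [SimpleGraph.Walk.length_cons, Nat.even_add_one] at hij
      cases i <;> cases j <;> simp_all
    obtain ⟨q, hq⟩ := ih (!i) j hpar
    exact ⟨SimpleGraph.Walk.cons hb q, by simp [hq]⟩

lemma bdc_proj_walk (G : SimpleGraph V) {i j : Bool} {v w : V}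
    (q : (bipDoubleCover G).Walk (inc i v) (inc j w)) :
    ∃ p : G.Walk v w, p.length = q.length ∧ (i = j ↔ Even q.length) := by
  refine ⟨((q.map (bdcProj G)).copy (elim_inc i v) (elim_inc j w)), (SimpleGraph.Walk.length_copy _ _ _).trans (SimpleGraph.Walk.length_map _ _), ?_⟩
  rw [bdc_parity q, isLeft_inc, isLeft_inc]
  cases i <;> cases j <;> simp

lemma walk_len1 {H : SimpleGraph V} {a b : V} (p : H.Walk a b) (h : p.length = 1) :
    H.Adj a b := by
  cases p with
  | nil => simp at h
  | cons h1 p1 =>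
    cases p1 with
    | nil => exact h1
    | cons h2 p2 => simp only [SimpleGraph.Walk.length_cons] at h; omega

lemma walk_len2 {H : SimpleGraph V} {a b : V} (p : H.Walk a b) (h : p.length = 2) :
    ∃ m, H.Adj a m ∧ H.Adj m b := by
  cases p with
  | nil => simp at h
  | cons h1 p1 =>
    cases p1 with
    | nil => simp at h
    | cons h2 p2 =>
      cases p2 with
      | nil => exact ⟨_, h1, h2⟩
      | cons h3 p3 => simp only [SimpleGraph.Walk.length_cons] at h; omega

lemma walk_len3 {H : SimpleGraph V} {a b : V} (p : H.Walk a b) (h : p.length = 3) :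
    ∃ m n, H.Adj a m ∧ H.Adj m n ∧ H.Adj n b := by
  cases p with
  | nil => simp at h
  | cons h1 p1 =>
    cases p1 with
    | nil => simp at h
    | cons h2 p2 =>
      cases p2 with
      | nil => simp at h
      | cons h3 p3 =>
        cases p3 with
        | nil => exact ⟨_, _, h1, h2, h3⟩
        | cons h4 p4 => simp only [SimpleGraph.Walk.length_cons] at h; omega

variable [Fintype V] (G : SimpleGraph V) [DecidableRel G.Adj]

lemma aux_dist2 (hconn : G.Connected) (hdiam : G.diam = 2) {v w : V}
    (hne : v ≠ w) (hnadj : ¬G.Adj v w) : ∃ c, G.Adj v c ∧ G.Adj c w := by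
  have hetop : G.ediam ≠ ⊤ := by
    intro h
    rw [SimpleGraph.diam, h, ENat.toNat_top] at hdiam
    omega
  have hd : G.dist v w ≤ 2 := hdiam ▸ SimpleGraph.dist_le_diam hetop
  have h0 : G.dist v w ≠ 0 := fun h => hne (hconn.dist_eq_zero_iff.mp h)
  have h1 : G.dist v w ≠ 1 := fun h => hnadj (SimpleGraph.dist_eq_one_iff_adj.mp h)
  have h2 : G.dist v w = 2 := by omega
  obtain ⟨p, hp⟩ := SimpleGraph.exists_walk_of_dist_ne_zero h0
  rw [h2] at hp
  exact walk_len2 p hp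

lemma aux_exists_x (k : ℕ) (hk : 3 ≤ k) (hreg : G.IsRegularOfDegree k)
    (htf : ∀ u v : V, G.Adj u v → ∀ x : V, ¬(G.Adj u x ∧ G.Adj v x))
    (hirr : ∀ u v : V, G.neighborSet u = G.neighborSet v → u = v)
    {v w : V} (hne : v ≠ w) : ∃ x, G.Adj w x ∧ ¬G.Adj v x ∧ x ≠ v := by
  by_contra hc
  push_neg at hc
  have hcard : ∀ u, (G.neighborFinset u).card = k := fun u => hreg u
  by_cases hadj : G.Adj v w
  · have hsub : G.neighborFinset w ⊆ {v} := by
      intro x hx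
      rw [SimpleGraph.mem_neighborFinset] at hx
      have hnvx : ¬G.Adj v x := fun h => htf v w hadj x ⟨h, hx⟩
      simp [hc x hx hnvx]
    have := Finset.card_le_card hsub
    rw [hcard w, Finset.card_singleton] at this
    omega
  · have hsub : G.neighborFinset w ⊆ G.neighborFinset v := by
      intro x hx
      rw [SimpleGraph.mem_neighborFinset] at hx ⊢
      by_cases hb : G.Adj v x
      · exact hb
      · exact absurd (hc x hx hb ▸ hx).symm hadj
    have heq : G.neighborFinset w = G.neighborFinset v :=
      Finset.eq_of_subset_of_card_le hsub (by rw [hcard w, hcard v])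
    rw [SimpleGraph.neighborFinset_def, SimpleGraph.neighborFinset_def,
      Set.toFinset_inj] at heq
    exact hne (hirr w v heq).symm

lemma aux_w3 (hconn : G.Connected) (hdiam : G.diam = 2) (k : ℕ) (hk : 3 ≤ k)
    (hreg : G.IsRegularOfDegree k)
    (htf : ∀ u v : V, G.Adj u v → ∀ x : V, ¬(G.Adj u x ∧ G.Adj v x))
    (hirr : ∀ u v : V, G.neighborSet u = G.neighborSet v → u = v)
    {v w : V} (hne : v ≠ w) : ∃ p : G.Walk v w, p.length = 3 := by
  obtain ⟨x, hwx, hnvx, hxv⟩ := aux_exists_x G k hk hreg htf hirr hne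
  obtain ⟨c, hvc, hcx⟩ := aux_dist2 G hconn hdiam (Ne.symm hxv) hnvx
  exact ⟨.cons hvc (.cons hcx (.cons hwx.symm .nil)), rfl⟩

lemma aux_w4 (hconn : G.Connected) (hdiam : G.diam = 2) (k : ℕ) (hk : 3 ≤ k)
    (hreg : G.IsRegularOfDegree k)
    (htf : ∀ u v : V, G.Adj u v → ∀ x : V, ¬(G.Adj u x ∧ G.Adj v x))
    (hirr : ∀ u v : V, G.neighborSet u = G.neighborSet v → u = v)
    {v w : V} (hadj : G.Adj v w) : ∃ p : G.Walk v w, p.length = 4 := by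
  have hcard : (G.neighborFinset v).card = k := hreg v
  obtain ⟨u, hu, huw⟩ := Finset.exists_mem_ne (by rw [hcard]; omega) w
  rw [SimpleGraph.mem_neighborFinset] at hu
  obtain ⟨m, hum, hnwm, hmw⟩ := aux_exists_x G k hk hreg htf hirr (Ne.symm huw)
  obtain ⟨c, hmc, hcw⟩ := aux_dist2 G hconn hdiam hmw (fun h => hnwm h.symm)
  exact ⟨.cons hu (.cons hum (.cons hmc (.cons hcw .nil))), rfl⟩

lemma aux_w5 (hconn : G.Connected) (hdiam : G.diam = 2) (k : ℕ) (hk : 3 ≤ k)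
    (hreg : G.IsRegularOfDegree k)
    (htf : ∀ u v : V, G.Adj u v → ∀ x : V, ¬(G.Adj u x ∧ G.Adj v x))
    (hirr : ∀ u v : V, G.neighborSet u = G.neighborSet v → u = v)
    (v : V) : ∃ p : G.Walk v v, p.length = 5 := by
  have hcard : (G.neighborFinset v).card = k := hreg v
  obtain ⟨u, hu, huv⟩ := Finset.exists_mem_ne (by rw [hcard]; omega) v
  rw [SimpleGraph.mem_neighborFinset] at hu
  obtain ⟨x, hux, hnvx, hxv⟩ := aux_exists_x G k hk hreg htf hirr hu.ne
  obtain ⟨p3, hp3⟩ := aux_w3 G hconn hdiam k hk hreg htf hirr hxv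
  exact ⟨.cons hu (.cons hux p3), by simp [hp3]⟩

end Aux

theorem stmt1 {V : Type*} [Fintype V] (G : SimpleGraph V) [DecidableRel G.Adj] (k : ℕ) (hk : 3 ≤ k)
    (hconn : G.Connected) (hreg : G.IsRegularOfDegree k) (hdiam : G.diam = 2)
    (htf : ∀ u v : V, G.Adj u v → ∀ x : V, ¬(G.Adj u x ∧ G.Adj v x))
    (hirr : ∀ u v : V, G.neighborSet u = G.neighborSet v → u = v)
    (i j : Bool) (v w : V) :
    ((bipDoubleCover G).dist (inc i v) (inc j w) = 1 ↔ i ≠ j ∧ G.Adj v w) ∧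
    ((bipDoubleCover G).dist (inc i v) (inc j w) = 2 ↔ i = j ∧ v ≠ w ∧ ¬G.Adj v w) ∧
    ((bipDoubleCover G).dist (inc i v) (inc j w) = 3 ↔ i ≠ j ∧ v ≠ w ∧ ¬G.Adj v w) ∧
    ((bipDoubleCover G).dist (inc i v) (inc j w) = 4 ↔ i = j ∧ G.Adj v w) ∧
    ((bipDoubleCover G).dist (inc i v) (inc j w) = 5 ↔ i ≠ j ∧ v = w) := by
  have hneq_side : ∀ (a b : Bool) (x y : V), a ≠ b → inc a x ≠ inc b y := by
    intro a b x y hab h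
    apply hab
    have := congrArg Sum.isLeft h
    rw [isLeft_inc, isLeft_inc] at this
    cases a <;> cases b <;> simp_all
  have hneq_same : ∀ (a : Bool) (x y : V), x ≠ y → inc a x ≠ inc a y := by
    intro a x y hxy h
    exact hxy (by cases a <;> simpa [inc] using h)
  by_cases hij : i = j
  · subst hij
    by_cases hvw : v = w
    · subst hvw
      have hd : (bipDoubleCover G).dist (inc i v) (inc i v) = 0 :=
        SimpleGraph.dist_self
      simp [hd, G.irrefl]
    · by_cases hadj : G.Adj v w
      · -- case (e): dist = 4
        obtain ⟨p, hp⟩ := aux_w4 G hconn hdiam k hk hreg htf hirr hadj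
        obtain ⟨q, hq⟩ := bdc_lift G p i i
          (by rw [hp]; exact ⟨fun _ => ⟨2, rfl⟩, fun _ => rfl⟩)
        have hub : (bipDoubleCover G).dist (inc i v) (inc i w) ≤ 4 := by
          have := SimpleGraph.dist_le q
          omega
        have h0 : (bipDoubleCover G).dist (inc i v) (inc i w) ≠ 0 :=
          SimpleGraph.dist_ne_zero_iff_ne_and_reachable.mpr ⟨hneq_same i v w hvw, ⟨q⟩⟩
        obtain ⟨q', hq'⟩ := SimpleGraph.exists_walk_of_dist_ne_zero h0
        obtain ⟨p', hp'len, hpar⟩ := bdc_proj_walk G q'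
        have heven : q'.length % 2 = 0 := Nat.even_iff.mp (hpar.mp rfl)
        have h2 : q'.length ≠ 2 := by
          intro h2
          obtain ⟨m, hvm, hmw⟩ := walk_len2 p' (by omega)
          exact htf v w hadj m ⟨hvm, hmw.symm⟩
        have hd : (bipDoubleCover G).dist (inc i v) (inc i w) = 4 := by omega
        simp [hd, hadj]
      · -- case (c): dist = 2
        obtain ⟨c, hvc, hcw⟩ := aux_dist2 G hconn hdiam hvw hadj
        obtain ⟨q, hq⟩ := bdc_lift G (.cons hvc (.cons hcw .nil)) i i
          (⟨fun _ => ⟨1, rfl⟩, fun _ => rfl⟩)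
        have hub : (bipDoubleCover G).dist (inc i v) (inc i w) ≤ 2 := by
          have := SimpleGraph.dist_le q
          simp only [SimpleGraph.Walk.length_cons, SimpleGraph.Walk.length_nil] at hq
          omega
        have h0 : (bipDoubleCover G).dist (inc i v) (inc i w) ≠ 0 :=
          SimpleGraph.dist_ne_zero_iff_ne_and_reachable.mpr ⟨hneq_same i v w hvw, ⟨q⟩⟩
        obtain ⟨q', hq'⟩ := SimpleGraph.exists_walk_of_dist_ne_zero h0
        obtain ⟨p', hp'len, hpar⟩ := bdc_proj_walk G q'
        have heven : q'.length % 2 = 0 := Nat.even_iff.mp (hpar.mp rfl)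
        have hd : (bipDoubleCover G).dist (inc i v) (inc i w) = 2 := by omega
        simp [hd, hvw, hadj]
  · by_cases hvw : v = w
    · subst hvw
      -- case (f): dist = 5
      obtain ⟨p, hp⟩ := aux_w5 G hconn hdiam k hk hreg htf hirr v
      obtain ⟨q, hq⟩ := bdc_lift G p i j
        (by
          rw [hp]
          exact ⟨fun h => absurd h hij, fun h => absurd h (by decide)⟩)
      have hub : (bipDoubleCover G).dist (inc i v) (inc j v) ≤ 5 := by
        have := SimpleGraph.dist_le q
        omega
      have h0 : (bipDoubleCover G).dist (inc i v) (inc j v) ≠ 0 :=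
        SimpleGraph.dist_ne_zero_iff_ne_and_reachable.mpr ⟨hneq_side i j v v hij, ⟨q⟩⟩
      obtain ⟨q', hq'⟩ := SimpleGraph.exists_walk_of_dist_ne_zero h0
      obtain ⟨p', hp'len, hpar⟩ := bdc_proj_walk G q'
      have hodd : q'.length % 2 = 1 := by
        rcases Nat.even_or_odd q'.length with he | ho
        · exact absurd (hpar.mpr he) hij
        · exact Nat.odd_iff.mp ho
      have h1 : q'.length ≠ 1 := by
        intro h1
        exact G.irrefl (walk_len1 p' (by omega))
      have h3 : q'.length ≠ 3 := by
        intro h3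
        obtain ⟨m, n, hvm, hmn, hnv⟩ := walk_len3 p' (by omega)
        exact htf v m hvm n ⟨hnv.symm, hmn⟩
      have hd : (bipDoubleCover G).dist (inc i v) (inc j v) = 5 := by omega
      simp [hd, hij, G.irrefl]
    · by_cases hadj : G.Adj v w
      · -- case (b): dist = 1
        have hb := bdc_adj_of G hij hadj
        have hub : (bipDoubleCover G).dist (inc i v) (inc j w) ≤ 1 := by
          have := SimpleGraph.dist_le hb.toWalk
          simpa using this
        have h0 : (bipDoubleCover G).dist (inc i v) (inc j w) ≠ 0 :=
          SimpleGraph.dist_ne_zero_iff_ne_and_reachable.mpr ⟨hneq_side i j v w hij, ⟨hb.toWalk⟩⟩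
        have hd : (bipDoubleCover G).dist (inc i v) (inc j w) = 1 := by omega
        simp [hd, hij, hadj, hadj.ne]
      · -- case (d): dist = 3
        obtain ⟨p, hp⟩ := aux_w3 G hconn hdiam k hk hreg htf hirr hvw
        obtain ⟨q, hq⟩ := bdc_lift G p i j
          (by
            rw [hp]
            exact ⟨fun h => absurd h hij, fun h => absurd h (by decide)⟩)
        have hub : (bipDoubleCover G).dist (inc i v) (inc j w) ≤ 3 := by
          have := SimpleGraph.dist_le q
          omega
        have h0 : (bipDoubleCover G).dist (inc i v) (inc j w) ≠ 0 :=
          SimpleGraph.dist_ne_zero_iff_ne_and_reachable.mpr ⟨hneq_side i j v w hij, ⟨q⟩⟩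
        obtain ⟨q', hq'⟩ := SimpleGraph.exists_walk_of_dist_ne_zero h0
        obtain ⟨p', hp'len, hpar⟩ := bdc_proj_walk G q'
        have hodd : q'.length % 2 = 1 := by
          rcases Nat.even_or_odd q'.length with he | ho
          · exact absurd (hpar.mpr he) hij
          · exact Nat.odd_iff.mp ho
        have h1 : q'.length ≠ 1 := by
          intro h1
          exact hadj (walk_len1 p' (by omega))
        have hd : (bipDoubleCover G).dist (inc i v) (inc j w) = 3 := by omega
        simp [hd, hij, hvw, hadj]
end

section
/- Let G be a connected triangle-free strongly regular graph that is reducible, i.e., there exist two distinct vertices v and w with N(v) = N(w). Then G is isomorphic to the complete bipartite graph K_{m,m}, where m is the common degree of the vertices of G (in particular G has 2m vertices). -/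
open SimpleGraph

theorem stmt13 {V : Type*} [Fintype V] [DecidableEq V] (G : SimpleGraph V)
    [DecidableRel G.Adj] (n d c : ℕ)
    (hconn : G.Connected) (hsrg : G.IsSRGWith n d 0 c)
    (hred : ∃ v w : V, v ≠ w ∧ G.neighborSet v = G.neighborSet w) :
    Nonempty (G ≃g completeBipartiteGraph (Fin d) (Fin d)) ∧
      Fintype.card V = 2 * d := by
  classical
  obtain ⟨v, w, hvw, hN⟩ := hred
  -- triangle-free
  have htf : ∀ x y z : V, G.Adj x y → G.Adj x z → G.Adj y z → False := by
    intro x y z hxy hxz hyz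
    have h0 := hsrg.of_adj y z hyz
    have hx : x ∈ G.commonNeighbors y z := ⟨hxy.symm, hxz.symm⟩
    have : 0 < Fintype.card (G.commonNeighbors y z) :=
      Fintype.card_pos_iff.mpr ⟨⟨x, hx⟩⟩
    omega
  have hnadj : ¬ G.Adj v w := by
    intro h
    have hw : w ∈ G.neighborSet v := h
    rw [hN] at hw
    exact G.irrefl hw
  have hcard_ns : ∀ x : V, Fintype.card (G.neighborSet x) = d := fun x => by
    rw [G.card_neighborSet_eq_degree x]; exact hsrg.regular x
  have hcd : c = d := by
    have h1 := hsrg.of_not_adj hvw hnadj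
    have h2 : G.commonNeighbors v w = G.neighborSet v := by
      rw [commonNeighbors_eq, hN, Set.inter_self]
    rw [Fintype.card_congr (Equiv.setCongr h2), hcard_ns v] at h1
    omega
  -- twin lemma for nonadjacent pairs
  have hnn : ∀ x y : V, x ≠ y → ¬ G.Adj x y →
      G.neighborSet x = G.neighborSet y := by
    intro x y hxy hnadj'
    have hc := hsrg.of_not_adj hxy hnadj'
    rw [hcd] at hc
    have hsubx : G.commonNeighbors x y = G.neighborSet x := by
      apply Set.eq_of_subset_of_card_le (G.commonNeighbors_subset_neighborSet_left x y)
      rw [hc, hcard_ns x]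
    have hsuby : G.commonNeighbors x y = G.neighborSet y := by
      apply Set.eq_of_subset_of_card_le (G.commonNeighbors_subset_neighborSet_right x y)
      rw [hc, hcard_ns y]
    rw [← hsubx, hsuby]
  -- find a neighbor u of v
  obtain ⟨u, hu⟩ : ∃ u, G.Adj v u := by
    obtain ⟨p⟩ := hconn v w
    cases p with
    | nil => exact absurd rfl hvw
    | cons h _ => exact ⟨_, h⟩
  set S : Set V := G.neighborSet v with hS
  set T : Set V := G.neighborSet u with hT
  have hdisj : ∀ x, x ∈ S → x ∈ T → False := fun x hxS hxT =>
    htf v u x hu hxS hxT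
  have hcover : ∀ x, x ∉ S → x ∈ T := by
    intro x hx
    by_cases hxv : x = v
    · subst hxv; exact hu.symm
    · have hnadjvx : ¬ G.Adj v x := hx
      have := hnn v x (Ne.symm hxv) hnadjvx
      have hxu : G.Adj x u := by
        have : u ∈ G.neighborSet x := this ▸ hu
        exact this
      exact hxu.symm
  -- neighborhoods of vertices in S equal T, and vice versa
  have hNS : ∀ x, x ∈ S → G.neighborSet x = T := by
    intro x hxS
    by_cases hxu : x = u
    · subst hxu; rfl
    · have hnadjxu : ¬ G.Adj x u := fun h => htf v x u hxS hu h
      exact hnn x u hxu hnadjxu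
  have hNT : ∀ x, x ∈ T → G.neighborSet x = S := by
    intro x hxT
    by_cases hxv : x = v
    · subst hxv; rfl
    · have hnadjxv : ¬ G.Adj x v := fun h => htf u x v hxT hu.symm h
      exact hnn x v hxv hnadjxv
  have hadj_iff : ∀ a b : V, G.Adj a b ↔ ((a ∈ S ∧ b ∉ S) ∨ (a ∉ S ∧ b ∈ S)) := by
    intro a b
    constructor
    · intro hab
      by_cases haS : a ∈ S
      · left
        refine ⟨haS, fun hbS => ?_⟩
        exact htf v a b haS hbS hab
      · right
        refine ⟨haS, ?_⟩
        have haT : a ∈ T := hcover a haS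
        have hbS : b ∈ G.neighborSet a := hab
        rw [hNT a haT] at hbS
        exact hbS
    · rintro (⟨haS, hbS⟩ | ⟨haS, hbS⟩)
      · have hbT : b ∈ T := hcover b hbS
        have : b ∈ G.neighborSet a := by rw [hNS a haS]; exact hbT
        exact this
      · have haT : a ∈ T := hcover a haS
        have : b ∈ G.neighborSet a := by rw [hNT a haT]; exact hbS
        exact this
  have hcardS : Fintype.card S = d := hcard_ns v
  have hcardT : Fintype.card T = d := hcard_ns u
  have hcomplT : ∀ x, ¬ x ∈ S ↔ x ∈ T := fun x =>
    ⟨hcover x, fun hxT hxS => hdisj x hxS hxT⟩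
  -- build the equivalence
  have hcardSc : Fintype.card {x // ¬ x ∈ S} = d := by
    rw [Fintype.card_congr (Equiv.subtypeEquivRight hcomplT)]
    exact hcardT
  let eS : {x // x ∈ S} ≃ Fin d := Fintype.equivFinOfCardEq hcardS
  let eT : {x // ¬ x ∈ S} ≃ Fin d := Fintype.equivFinOfCardEq hcardSc
  let e : V ≃ Fin d ⊕ Fin d :=
    (Equiv.sumCompl (· ∈ S)).symm.trans (Equiv.sumCongr eS eT)
  have hcardV : Fintype.card V = 2 * d := by
    rw [Fintype.card_congr e]
    simp [Fintype.card_sum, two_mul]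
  refine ⟨⟨⟨e, ?_⟩⟩, hcardV⟩
  intro a b
  by_cases ha : a ∈ S <;> by_cases hb : b ∈ S <;>
    simp [e, Equiv.sumCompl_symm_apply_of_pos, Equiv.sumCompl_symm_apply_of_neg,
      ha, hb, hadj_iff a b]
end
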